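/- arXiv:1412.6579 — 2 statements merged into one kernel-verified Lean document; each statement's English description precedes it below -/
import Mathlib

section
/- Total-correctness completeness of the trace-based Hoare logic: for any While statement s, state predicate U and setoid trace predicate P, if for every state σ with U σ there exists a trace τ such that (s,σ) ⇒ τ and τ satisfies P, then ⊢{U} s {P} is derivable. -/
namespace WhileTrace

/-- Program variables. -/
abbrev Var := ℕ
/-- States assign integer values to variables. -/
abbrev State := Var → ℤ
/-- Arithmetic expressions, modelled by their integer value in each state. -/
abbrev Expr := State → ℤ

/-- State update `σ[x ↦ v]`. -/
def update (σ : State) (x : Var) (v : ℤ) : State := Function.update σ x v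

/-- Reading an expression as a boolean: `σ ⊨ e`. -/
def istrue (e : Expr) (σ : State) : Prop := e σ ≠ 0

/-- Traces: nonempty, possibly infinite sequences of states
(a head state together with a possibly infinite sequence of further states). -/
def Trace : Type := State × Stream'.Seq State

/-- The singleton trace `⟨σ⟩`. -/
def Trace.single (σ : State) : Trace := (σ, Stream'.Seq.nil)

/-- The cons trace `σ :: τ`. -/
def Trace.cons (σ : State) (τ : Trace) : Trace := (σ, Stream'.Seq.cons τ.1 τ.2)

/-- The first state of a trace. -/
def Trace.hd (τ : Trace) : State := τ.1

/-- Bisimilarity of traces `τ ≈ τ'`, as a greatest fixed point: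
there is a relation `R` relating the two traces that is consistent with the
coinductive rules `⟨σ⟩ ≈ ⟨σ⟩` and `σ::τ ≈ σ::τ'` whenever `τ ≈ τ'`. -/
def Bisim (τ τ' : Trace) : Prop :=
  ∃ R : Trace → Trace → Prop, R τ τ' ∧
    ∀ a b, R a b →
      (∃ σ, a = Trace.single σ ∧ b = Trace.single σ) ∨
      (∃ σ a' b', a = Trace.cons σ a' ∧ b = Trace.cons σ b' ∧ R a' b')

/-- Finiteness `τ ↓ σ` : `τ` is finite with last state `σ` (inductive). -/
inductive Converges : Trace → State → Prop
  | single (σ : State) : Converges (Trace.single σ) σ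
  | cons (σ' : State) {τ : Trace} {σ : State} :
      Converges τ σ → Converges (Trace.cons σ' τ) σ

/-- Infiniteness of a trace (coinductive, as a greatest fixed point). -/
def InfiniteT (τ : Trace) : Prop :=
  ∃ P : Trace → Prop, P τ ∧ ∀ a, P a → ∃ σ a', a = Trace.cons σ a' ∧ P a'

/-- Statements of the While language. -/
inductive Stmt : Type
  | assign (x : Var) (e : Expr)
  | skip
  | seq (s₀ s₁ : Stmt)
  | ifte (e : Expr) (st sf : Stmt)
  | whileDo (e : Expr) (st : Stmt)

/-- A pair of relations `(E, ES)` is consistent with the rules of evaluation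
and extended evaluation: every claimed evaluation is backed by one of the
coinductive rules, with premises again in `(E, ES)`. -/
def EvalConsistent (E : Stmt → State → Trace → Prop)
    (ES : Stmt → Trace → Trace → Prop) : Prop :=
  (∀ x e σ τ, E (.assign x e) σ τ →
      τ = Trace.cons σ (Trace.single (update σ x (e σ)))) ∧
  (∀ σ τ, E .skip σ τ → τ = Trace.single σ) ∧
  (∀ s₀ s₁ σ τ', E (.seq s₀ s₁) σ τ' → ∃ τ, E s₀ σ τ ∧ ES s₁ τ τ') ∧
  (∀ e st sf σ τ, E (.ifte e st sf) σ τ →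
      (istrue e σ ∧ ES st (Trace.cons σ (Trace.single σ)) τ) ∨
      (¬ istrue e σ ∧ ES sf (Trace.cons σ (Trace.single σ)) τ)) ∧
  (∀ e st σ τ', E (.whileDo e st) σ τ' →
      (istrue e σ ∧ ∃ τ, ES st (Trace.cons σ (Trace.single σ)) τ ∧
        ES (.whileDo e st) τ τ') ∨
      (¬ istrue e σ ∧ τ' = Trace.cons σ (Trace.single σ))) ∧
  (∀ s τ τ', ES s τ τ' →
      (∃ σ, τ = Trace.single σ ∧ E s σ τ') ∨
      (∃ σ τ₀ τ₀', τ = Trace.cons σ τ₀ ∧ τ' = Trace.cons σ τ₀' ∧ ES s τ₀ τ₀'))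

/-- Evaluation `(s,σ) ⇒ τ` : greatest fixed point of the mutual coinductive rules. -/
def Exec (s : Stmt) (σ : State) (τ : Trace) : Prop :=
  ∃ E ES, EvalConsistent E ES ∧ E s σ τ

/-- Extended evaluation `(s,τ) ⇒* τ'`. -/
def ExecSeq (s : Stmt) (τ τ' : Trace) : Prop :=
  ∃ E ES, EvalConsistent E ES ∧ ES s τ τ'

/-- The standard inductive state-based big-step semantics `(s,σ) ⇓ σ'`. -/
inductive BigStep : Stmt → State → State → Prop
  | assign (x : Var) (e : Expr) (σ : State) :
      BigStep (.assign x e) σ (update σ x (e σ))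
  | skip (σ : State) : BigStep .skip σ σ
  | seq {s₀ s₁ : Stmt} {σ σ' σ'' : State} :
      BigStep s₀ σ σ' → BigStep s₁ σ' σ'' → BigStep (.seq s₀ s₁) σ σ''
  | ifTrue {e : Expr} {st sf : Stmt} {σ σ' : State} :
      istrue e σ → BigStep st σ σ' → BigStep (.ifte e st sf) σ σ'
  | ifFalse {e : Expr} {st sf : Stmt} {σ σ' : State} :
      ¬ istrue e σ → BigStep sf σ σ' → BigStep (.ifte e st sf) σ σ'
  | whileTrue {e : Expr} {st : Stmt} {σ σ' σ'' : State} :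
      istrue e σ → BigStep st σ σ' → BigStep (.whileDo e st) σ' σ'' →
      BigStep (.whileDo e st) σ σ''
  | whileFalse {e : Expr} {st : Stmt} {σ : State} :
      ¬ istrue e σ → BigStep (.whileDo e st) σ σ

/-- State predicates. -/
abbrev StatePred := State → Prop
/-- Trace predicates. -/
abbrev TracePred := Trace → Prop

/-- A setoid trace predicate respects bisimilarity. -/
def IsSetoidPred (P : TracePred) : Prop := ∀ τ τ', P τ → Bisim τ τ' → P τ'

/-- The singleton predicate `[U]`. -/
def Sglt (U : StatePred) : TracePred :=
  fun τ => ∃ σ, U σ ∧ τ = Trace.single σ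

/-- The doubleton predicate `⟨U⟩`. -/
def Dup (U : StatePred) : TracePred :=
  fun τ => ∃ σ, U σ ∧ τ = Trace.cons σ (Trace.single σ)

/-- The update predicate `U[x ↦ e]`. -/
def UpdPred (U : StatePred) (x : Var) (e : Expr) : TracePred :=
  fun τ => ∃ σ, U σ ∧ τ = Trace.cons σ (Trace.single (update σ x (e σ)))

/-- `Q follows τ in τ'` (coinductive, as a greatest fixed point). -/
def Follows (Q : TracePred) (τ τ' : Trace) : Prop :=
  ∃ R : Trace → Trace → Prop, R τ τ' ∧
    ∀ a b, R a b →
      (∃ σ, a = Trace.single σ ∧ b.hd = σ ∧ Q b) ∨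
      (∃ σ a' b', a = Trace.cons σ a' ∧ b = Trace.cons σ b' ∧ R a' b')

/-- The chop `P ** Q`. -/
def Chop (P Q : TracePred) : TracePred :=
  fun τ' => ∃ τ, P τ ∧ Follows Q τ τ'

/-- The iteration `P*` (coinductive, as a greatest fixed point). -/
def Iter (P : TracePred) : TracePred := fun τ =>
  ∃ X : TracePred, X τ ∧
    ∀ a, X a → Sglt (fun _ => True) a ∨ ∃ τ₀, P τ₀ ∧ Follows X τ₀ a

/-- `Last P` : states that are the last state of some finite trace satisfying `P`. -/
def Last (P : TracePred) : StatePred := fun σ => ∃ τ, P τ ∧ Converges τ σ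

/-- The trace predicate `finite`. -/
def FiniteT : TracePred := fun τ => ∃ σ, Converges τ σ

/-- Derivability `⊢ {U} s {P}` in the trace-based Hoare logic. -/
inductive THoare : StatePred → Stmt → TracePred → Prop
  | assign (U : StatePred) (x : Var) (e : Expr) :
      THoare U (.assign x e) (UpdPred U x e)
  | skip (U : StatePred) : THoare U .skip (Sglt U)
  | seq {U V : StatePred} {s₀ s₁ : Stmt} {P Q : TracePred} :
      THoare U s₀ (Chop P (Sglt V)) → THoare V s₁ Q →
      THoare U (.seq s₀ s₁) (Chop P Q)
  | ifte {U : StatePred} {e : Expr} {st sf : Stmt} {P : TracePred} :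
      THoare (fun σ => istrue e σ ∧ U σ) st P →
      THoare (fun σ => ¬ istrue e σ ∧ U σ) sf P →
      THoare U (.ifte e st sf) (Chop (Dup U) P)
  | whileDo {U I : StatePred} {e : Expr} {st : Stmt} {P : TracePred} :
      (∀ σ, U σ → I σ) →
      THoare (fun σ => istrue e σ ∧ I σ) st (Chop P (Sglt I)) →
      THoare U (.whileDo e st)
        (Chop (Dup U)
          (Chop (Iter (Chop P (Dup I))) (Sglt (fun σ => ¬ istrue e σ))))
  | conseq {U U' : StatePred} {s : Stmt} {P P' : TracePred} :
      (∀ σ, U σ → U' σ) → THoare U' s P' → (∀ τ, P' τ → P τ) →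
      THoare U s P
  | exist {Z : Type} {U : Z → StatePred} {s : Stmt} {P : Z → TracePred} :
      (∀ z, THoare (U z) s (P z)) →
      THoare (fun σ => ∃ z, U z σ) s (fun τ => ∃ z, P z τ)

/-- Derivability `⊢p {U} s {Z}` in the state-based partial-correctness Hoare logic. -/
inductive PHoare : StatePred → Stmt → StatePred → Prop
  | assign (Z : StatePred) (x : Var) (e : Expr) :
      PHoare (fun σ => Z (update σ x (e σ))) (.assign x e) Z
  | skip (U : StatePred) : PHoare U .skip U
  | seq {U V Z : StatePred} {s₀ s₁ : Stmt} :
      PHoare U s₀ V → PHoare V s₁ Z → PHoare U (.seq s₀ s₁) Z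
  | ifte {U Z : StatePred} {e : Expr} {st sf : Stmt} :
      PHoare (fun σ => istrue e σ ∧ U σ) st Z →
      PHoare (fun σ => ¬ istrue e σ ∧ U σ) sf Z →
      PHoare U (.ifte e st sf) Z
  | whileDo {I : StatePred} {e : Expr} {st : Stmt} :
      PHoare (fun σ => istrue e σ ∧ I σ) st I →
      PHoare I (.whileDo e st) (fun σ => I σ ∧ ¬ istrue e σ)
  | exist {Z : Type} {U V : Z → StatePred} {s : Stmt} :
      (∀ z, PHoare (U z) s (V z)) →
      PHoare (fun σ => ∃ z, U z σ) s (fun σ => ∃ z, V z σ)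
  | conseq {U U' Z Z' : StatePred} {s : Stmt} :
      (∀ σ, U σ → U' σ) → PHoare U' s Z' → (∀ σ, Z' σ → Z σ) →
      PHoare U s Z

/-- Derivability `⊢t {U} s {Z}` in the state-based total-correctness Hoare
logic, with the `while-fun` rule. -/
inductive TotHoare : StatePred → Stmt → StatePred → Prop
  | assign (Z : StatePred) (x : Var) (e : Expr) :
      TotHoare (fun σ => Z (update σ x (e σ))) (.assign x e) Z
  | skip (U : StatePred) : TotHoare U .skip U
  | seq {U V Z : StatePred} {s₀ s₁ : Stmt} :
      TotHoare U s₀ V → TotHoare V s₁ Z → TotHoare U (.seq s₀ s₁) Z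
  | ifte {U Z : StatePred} {e : Expr} {st sf : Stmt} :
      TotHoare (fun σ => istrue e σ ∧ U σ) st Z →
      TotHoare (fun σ => ¬ istrue e σ ∧ U σ) sf Z →
      TotHoare U (.ifte e st sf) Z
  | whileFun {I : StatePred} {e : Expr} {st : Stmt} (t : State → ℕ) (m : ℕ) :
      (∀ n : ℕ, TotHoare (fun σ => istrue e σ ∧ I σ ∧ t σ = n) st
        (fun σ => I σ ∧ t σ < n)) →
      TotHoare (fun σ => I σ ∧ t σ = m) (.whileDo e st)
        (fun σ => I σ ∧ t σ ≤ m ∧ ¬ istrue e σ)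
  | exist {Z : Type} {U V : Z → StatePred} {s : Stmt} :
      (∀ z, TotHoare (U z) s (V z)) →
      TotHoare (fun σ => ∃ z, U z σ) s (fun σ => ∃ z, V z σ)
  | conseq {U U' Z Z' : StatePred} {s : Stmt} :
      (∀ σ, U σ → U' σ) → TotHoare U' s Z' → (∀ σ, Z' σ → Z σ) →
      TotHoare U s Z


/-! The strongest trace postcondition `StrongestPost U s` (all runs of `s` from `U`-states) is
derivable, by induction on `s`; then `P` follows by consequence, since evaluation is deterministic
up to bisimilarity and `P` respects bisimilarity.

The only real work is the loop: the invariant `True` suffices, because the body postcondition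
already records complete runs of the body, and a trace satisfying the postcondition of the loop
rule is turned into a run of the loop by coinduction. -/

namespace Trace

theorem single_ne_cons (σ σ' : State) (τ : Trace) : single σ ≠ cons σ' τ := by
  intro h
  have := congrArg (fun t : Trace => t.2.get? 0) h
  simp [single, cons] at this

@[simp]
theorem single_inj {σ σ' : State} : single σ = single σ' ↔ σ = σ' :=
  ⟨congrArg Prod.fst, congrArg single⟩

@[simp]
theorem cons_inj {σ σ' : State} {τ τ' : Trace} : cons σ τ = cons σ' τ' ↔ σ = σ' ∧ τ = τ' := by
  refine ⟨fun h => ?_, fun ⟨hσ, hτ⟩ => hσ ▸ hτ ▸ rfl⟩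
  obtain ⟨h₁, h₂⟩ := Stream'.Seq.cons_injective2 (congrArg Prod.snd h)
  exact ⟨congrArg Prod.fst h, Prod.ext h₁ h₂⟩

theorem single_or_cons (τ : Trace) : (∃ σ, τ = single σ) ∨ ∃ σ τ', τ = cons σ τ' := by
  obtain ⟨σ, s⟩ := τ
  induction s using Stream'.Seq.recOn with
  | nil => exact Or.inl ⟨σ, rfl⟩
  | cons x s => exact Or.inr ⟨σ, (x, s), rfl⟩

@[simp] theorem hd_cons (σ : State) (τ : Trace) : (cons σ τ).hd = σ := rfl

end Trace

open Trace

section Follows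

variable {P Q Q' : TracePred} {σ : State} {τ τ' t : Trace}

theorem follows_dest (h : Follows Q τ τ') :
    (∃ σ, τ = single σ ∧ τ'.hd = σ ∧ Q τ') ∨
    ∃ σ t t', τ = cons σ t ∧ τ' = cons σ t' ∧ Follows Q t t' := by
  obtain ⟨R, hR, hstep⟩ := h
  rcases hstep _ _ hR with h | ⟨σ, t, t', rfl, rfl, ht⟩
  · exact Or.inl h
  · exact Or.inr ⟨σ, t, t', rfl, rfl, R, ht, hstep⟩

@[simp]
theorem follows_single_iff : Follows Q (single σ) τ' ↔ τ'.hd = σ ∧ Q τ' := by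
  refine ⟨fun h => ?_, fun ⟨hhd, hQ⟩ => ?_⟩
  · rcases follows_dest h with ⟨σ', h', hhd, hQ⟩ | ⟨_, _, _, h', -⟩
    · exact ⟨hhd.trans (single_inj.1 h').symm, hQ⟩
    · exact absurd h' (single_ne_cons _ _ _)
  · refine ⟨fun a b => a = single σ ∧ b = τ', ⟨rfl, rfl⟩, ?_⟩
    rintro _ _ ⟨rfl, rfl⟩
    exact Or.inl ⟨σ, rfl, hhd, hQ⟩

@[simp]
theorem follows_cons_iff : Follows Q (cons σ t) τ' ↔ ∃ t', τ' = cons σ t' ∧ Follows Q t t' := by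
  refine ⟨fun h => ?_, fun ⟨t', h', ⟨R, hR, hstep⟩⟩ => ?_⟩
  · rcases follows_dest h with ⟨_, h', -⟩ | ⟨σ', t₀, t', h', rfl, ht⟩
    · exact absurd h'.symm (single_ne_cons _ _ _)
    · obtain ⟨rfl, rfl⟩ := cons_inj.1 h'
      exact ⟨t', rfl, ht⟩
  · subst h'
    refine ⟨fun a b => R a b ∨ a = cons σ t ∧ b = cons σ t', Or.inr ⟨rfl, rfl⟩, ?_⟩
    rintro a b (hab | ⟨rfl, rfl⟩)
    · rcases hstep a b hab with h | ⟨σ', a', b', ha, hb, hR'⟩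
      · exact Or.inl h
      · exact Or.inr ⟨σ', a', b', ha, hb, Or.inl hR'⟩
    · exact Or.inr ⟨σ, t, t', rfl, rfl, Or.inl hR⟩

theorem Follows.hd_eq (h : Follows Q τ τ') : τ'.hd = τ.hd := by
  rcases follows_dest h with ⟨σ, rfl, hhd, -⟩ | ⟨σ, t, t', rfl, rfl, -⟩
  · exact hhd
  · rfl

theorem Follows.mono (hQ : ∀ τ, Q τ → Q' τ) (h : Follows Q τ τ') : Follows Q' τ τ' := by
  obtain ⟨R, hR, hstep⟩ := h
  refine ⟨R, hR, fun a b hab => ?_⟩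
  rcases hstep a b hab with ⟨σ, ha, hhd, hb⟩ | h
  · exact Or.inl ⟨σ, ha, hhd, hQ b hb⟩
  · exact Or.inr h

theorem follows_self (h : ∀ σ, Converges τ σ → Q (single σ)) : Follows Q τ τ := by
  refine ⟨fun a b => a = b ∧ ∀ σ, Converges a σ → Q (single σ), ⟨rfl, h⟩, ?_⟩
  rintro a _ ⟨rfl, ha⟩
  rcases single_or_cons a with ⟨σ, rfl⟩ | ⟨σ, t, rfl⟩
  · exact Or.inl ⟨σ, rfl, rfl, ha σ (.single σ)⟩
  · exact Or.inr ⟨σ, t, t, rfl, rfl, rfl, fun σ' h => ha σ' (.cons σ h)⟩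

theorem Follows.chop {τ₁ τ₂ τ₃ : Trace} (h₁ : Follows P τ₁ τ₂) (h₂ : Follows Q τ₂ τ₃) :
    Follows (Chop P Q) τ₁ τ₃ := by
  refine ⟨fun a c => ∃ b, Follows P a b ∧ Follows Q b c, ⟨τ₂, h₁, h₂⟩, ?_⟩
  rintro a c ⟨b, hab, hbc⟩
  rcases single_or_cons a with ⟨σ, rfl⟩ | ⟨σ, a', rfl⟩
  · obtain ⟨hhd, hb⟩ := follows_single_iff.1 hab
    exact Or.inl ⟨σ, rfl, hbc.hd_eq.trans hhd, b, hb, hbc⟩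
  · obtain ⟨b', rfl, hab'⟩ := follows_cons_iff.1 hab
    obtain ⟨c', rfl, hbc'⟩ := follows_cons_iff.1 hbc
    exact Or.inr ⟨σ, a', c', rfl, rfl, b', hab', hbc'⟩

theorem iter_dest (h : Iter P τ) :
    (∃ σ, τ = single σ) ∨ ∃ τ₀, P τ₀ ∧ Follows (Iter P) τ₀ τ := by
  obtain ⟨X, hX, hstep⟩ := h
  rcases hstep τ hX with ⟨σ, -, rfl⟩ | ⟨τ₀, hP, hf⟩
  · exact Or.inl ⟨σ, rfl⟩
  · exact Or.inr ⟨τ₀, hP, hf.mono fun a ha => ⟨X, ha, hstep⟩⟩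

theorem chop_sglt {V : StatePred} (hV : ∀ σ, Converges τ σ → V σ) (hP : P τ) :
    Chop P (Sglt V) τ :=
  ⟨τ, hP, follows_self fun σ hσ => ⟨σ, hV σ hσ, rfl⟩⟩

theorem exists_of_chop_dup {U : StatePred} (h : Chop (Dup U) Q τ) :
    ∃ σ t, τ = cons σ t ∧ U σ ∧ t.hd = σ ∧ Q t := by
  obtain ⟨_, ⟨σ, hU, rfl⟩, hf⟩ := h
  obtain ⟨t, rfl, ht⟩ := follows_cons_iff.1 hf
  exact ⟨σ, t, rfl, hU, follows_single_iff.1 ht⟩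

end Follows

section Exec

variable {E E' : Stmt → State → Trace → Prop} {ES ES' : Stmt → Trace → Trace → Prop}
  {s : Stmt} {σ : State} {τ τ' t : Trace}

def EvalStep (E : Stmt → State → Trace → Prop) (ES : Stmt → Trace → Trace → Prop) :
    Stmt → State → Trace → Prop
  | .assign x e, σ, τ => τ = cons σ (single (update σ x (e σ)))
  | .skip, σ, τ => τ = single σ
  | .seq s₀ s₁, σ, τ' => ∃ τ, E s₀ σ τ ∧ ES s₁ τ τ'
  | .ifte e st sf, σ, τ =>
      (istrue e σ ∧ ES st (cons σ (single σ)) τ) ∨ (¬ istrue e σ ∧ ES sf (cons σ (single σ)) τ)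
  | .whileDo e st, σ, τ' =>
      (istrue e σ ∧ ∃ τ, ES st (cons σ (single σ)) τ ∧ ES (.whileDo e st) τ τ') ∨
      (¬ istrue e σ ∧ τ' = cons σ (single σ))

def EvalSeqStep (E : Stmt → State → Trace → Prop) (ES : Stmt → Trace → Trace → Prop)
    (s : Stmt) (τ τ' : Trace) : Prop :=
  (∃ σ, τ = single σ ∧ E s σ τ') ∨ ∃ σ t t', τ = cons σ t ∧ τ' = cons σ t' ∧ ES s t t'

theorem evalConsistent_iff : EvalConsistent E ES ↔
    (∀ s σ τ, E s σ τ → EvalStep E ES s σ τ) ∧ ∀ s τ τ', ES s τ τ' → EvalSeqStep E ES s τ τ' := by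
  refine ⟨fun ⟨hA, hS, hQ, hI, hW, hES⟩ => ⟨fun s σ τ h => ?_, hES⟩, fun ⟨hE, hES⟩ => ?_⟩
  · cases s with
    | assign x e => exact hA x e σ τ h
    | skip => exact hS σ τ h
    | seq s₀ s₁ => exact hQ s₀ s₁ σ τ h
    | ifte e st sf => exact hI e st sf σ τ h
    | whileDo e st => exact hW e st σ τ h
  · exact ⟨fun x e => hE (.assign x e), hE .skip, fun s₀ s₁ => hE (.seq s₀ s₁),
      fun e st sf => hE (.ifte e st sf), fun e st => hE (.whileDo e st), hES⟩

theorem EvalStep.mono (hE : E ≤ E') (hES : ES ≤ ES') (h : EvalStep E ES s σ τ) :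
    EvalStep E' ES' s σ τ := by
  cases s with
  | assign | skip => exact h
  | seq =>
    obtain ⟨τ, h₀, h₁⟩ := h
    exact ⟨τ, hE _ _ _ h₀, hES _ _ _ h₁⟩
  | ifte =>
    rcases h with ⟨he, h⟩ | ⟨he, h⟩
    · exact Or.inl ⟨he, hES _ _ _ h⟩
    · exact Or.inr ⟨he, hES _ _ _ h⟩
  | whileDo =>
    rcases h with ⟨he, τ, h₀, h₁⟩ | h
    · exact Or.inl ⟨he, τ, hES _ _ _ h₀, hES _ _ _ h₁⟩
    · exact Or.inr h

theorem EvalSeqStep.mono (hE : E ≤ E') (hES : ES ≤ ES') (h : EvalSeqStep E ES s τ τ') :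
    EvalSeqStep E' ES' s τ τ' := by
  rcases h with ⟨σ, rfl, h⟩ | ⟨σ, t, t', rfl, rfl, h⟩
  · exact Or.inl ⟨σ, rfl, hE _ _ _ h⟩
  · exact Or.inr ⟨σ, t, t', rfl, rfl, hES _ _ _ h⟩

theorem evalConsistent_exec : EvalConsistent Exec ExecSeq := by
  refine evalConsistent_iff.2 ⟨fun s σ τ ⟨E, ES, hc, h⟩ => ?_, fun s τ τ' ⟨E, ES, hc, h⟩ => ?_⟩
  · exact ((evalConsistent_iff.1 hc).1 s σ τ h).mono
      (fun _ _ _ h => ⟨E, ES, hc, h⟩) (fun _ _ _ h => ⟨E, ES, hc, h⟩)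
  · exact ((evalConsistent_iff.1 hc).2 s τ τ' h).mono
      (fun _ _ _ h => ⟨E, ES, hc, h⟩) (fun _ _ _ h => ⟨E, ES, hc, h⟩)

/-- Coinduction up to `Exec`: premises may already be known runs. -/
theorem evalConsistent_sup_exec
    (hE : ∀ s σ τ, E s σ τ → EvalStep (E ⊔ Exec) (ES ⊔ ExecSeq) s σ τ)
    (hES : ∀ s τ τ', ES s τ τ' → EvalSeqStep (E ⊔ Exec) (ES ⊔ ExecSeq) s τ τ') :
    EvalConsistent (E ⊔ Exec) (ES ⊔ ExecSeq) := by
  obtain ⟨hExec, hExecSeq⟩ := evalConsistent_iff.1 evalConsistent_exec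
  refine evalConsistent_iff.2 ⟨?_, ?_⟩
  · rintro s σ τ (h | h)
    · exact hE s σ τ h
    · exact (hExec s σ τ h).mono le_sup_right le_sup_right
  · rintro s τ τ' (h | h)
    · exact hES s τ τ' h
    · exact (hExecSeq s τ τ' h).mono le_sup_right le_sup_right

theorem exec_iff : Exec s σ τ ↔ EvalStep Exec ExecSeq s σ τ := by
  refine ⟨(evalConsistent_iff.1 evalConsistent_exec).1 s σ τ, fun h => ?_⟩
  exact ⟨_, _, evalConsistent_sup_exec (E := EvalStep Exec ExecSeq) (ES := fun _ _ _ => False)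
    (fun _ _ _ h => h.mono le_sup_right le_sup_right) (fun _ _ _ => False.elim), Or.inl h⟩

theorem execSeq_iff : ExecSeq s τ τ' ↔ EvalSeqStep Exec ExecSeq s τ τ' := by
  refine ⟨(evalConsistent_iff.1 evalConsistent_exec).2 s τ τ', fun h => ?_⟩
  exact ⟨_, _, evalConsistent_sup_exec (E := fun _ _ _ => False) (ES := EvalSeqStep Exec ExecSeq)
    (fun _ _ _ => False.elim) (fun _ _ _ h => h.mono le_sup_right le_sup_right), Or.inl h⟩

@[simp]
theorem execSeq_single_iff : ExecSeq s (single σ) τ ↔ Exec s σ τ := by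
  rw [execSeq_iff]
  simp [EvalSeqStep, single_ne_cons]

@[simp]
theorem execSeq_cons_iff : ExecSeq s (cons σ t) τ ↔ ∃ t', τ = cons σ t' ∧ ExecSeq s t t' := by
  rw [execSeq_iff]
  simp [EvalSeqStep, (single_ne_cons _ _ _).symm]

theorem execSeq_dup_iff : ExecSeq s (cons σ (single σ)) τ ↔ ∃ t, τ = cons σ t ∧ Exec s σ t := by
  simp

theorem exec_hd (h : Exec s σ τ) : τ.hd = σ := by
  induction s generalizing σ τ with
  | assign | skip => rw [exec_iff.1 h]; rfl
  | seq s₀ s₁ ih₀ ih₁ =>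
    obtain ⟨t, h₀, h₁⟩ := exec_iff.1 h
    rcases single_or_cons t with ⟨σ', rfl⟩ | ⟨σ', t', rfl⟩
    · exact (ih₁ (execSeq_single_iff.1 h₁)).trans (ih₀ h₀)
    · obtain ⟨_, rfl, -⟩ := execSeq_cons_iff.1 h₁
      simpa using ih₀ h₀
  | ifte e st sf =>
    rcases exec_iff.1 h with ⟨-, h⟩ | ⟨-, h⟩ <;> obtain ⟨_, rfl, -⟩ := execSeq_cons_iff.1 h <;> rfl
  | whileDo e st =>
    rcases exec_iff.1 h with ⟨-, _, h, h'⟩ | ⟨-, rfl⟩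
    · obtain ⟨_, rfl, -⟩ := execSeq_cons_iff.1 h
      obtain ⟨_, rfl, -⟩ := execSeq_cons_iff.1 h'
      rfl
    · rfl

end Exec

section Determinism

variable {s : Stmt} {σ : State} {τ τ' t t' : Trace}

/-- The bisimulation witnessing determinism: traces produced by one statement from related
starting traces. -/
inductive SameRun : Trace → Trace → Prop
  | refl (τ : Trace) : SameRun τ τ
  | execSeq {s : Stmt} {τ₀ τ₀' τ τ' : Trace} :
      SameRun τ₀ τ₀' → ExecSeq s τ₀ τ → ExecSeq s τ₀' τ' → SameRun τ τ'

def BisimStep (R : Trace → Trace → Prop) (τ τ' : Trace) : Prop :=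
  (∃ σ, τ = single σ ∧ τ' = single σ) ∨ ∃ σ t t', τ = cons σ t ∧ τ' = cons σ t' ∧ R t t'

theorem BisimStep.refl {R : Trace → Trace → Prop} (hR : ∀ τ, R τ τ) (τ : Trace) :
    BisimStep R τ τ := by
  rcases single_or_cons τ with ⟨σ, rfl⟩ | ⟨σ, t, rfl⟩
  · exact Or.inl ⟨σ, rfl, rfl⟩
  · exact Or.inr ⟨σ, t, t, rfl, rfl, hR t⟩

theorem BisimStep.execSeq
    (hs : ∀ σ τ τ', Exec s σ τ → Exec s σ τ' → BisimStep SameRun τ τ')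
    (h₀ : BisimStep SameRun t t') (h : ExecSeq s t τ) (h' : ExecSeq s t' τ') :
    BisimStep SameRun τ τ' := by
  rcases h₀ with ⟨σ, rfl, rfl⟩ | ⟨σ, t₀, t₀', rfl, rfl, hR⟩
  · exact hs σ τ τ' (execSeq_single_iff.1 h) (execSeq_single_iff.1 h')
  · obtain ⟨u, rfl, hu⟩ := execSeq_cons_iff.1 h
    obtain ⟨u', rfl, hu'⟩ := execSeq_cons_iff.1 h'
    exact Or.inr ⟨σ, u, u', rfl, rfl, .execSeq hR hu hu'⟩

theorem bisimStep_of_exec (h : Exec s σ τ) (h' : Exec s σ τ') : BisimStep SameRun τ τ' := by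
  induction s generalizing σ τ τ' with
  | assign | skip =>
    rw [exec_iff.1 h, exec_iff.1 h']
    exact .refl .refl _
  | seq s₀ s₁ ih₀ ih₁ =>
    obtain ⟨t, h₀, h₁⟩ := exec_iff.1 h
    obtain ⟨t', h₀', h₁'⟩ := exec_iff.1 h'
    exact (ih₀ h₀ h₀').execSeq (fun _ _ _ => ih₁) h₁ h₁'
  | ifte e st sf ihT ihF =>
    rcases exec_iff.1 h with ⟨he, h⟩ | ⟨he, h⟩ <;>
      rcases exec_iff.1 h' with ⟨he', h'⟩ | ⟨he', h'⟩
    · exact (BisimStep.refl .refl _).execSeq (fun _ _ _ => ihT) h h'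
    · exact absurd he he'
    · exact absurd he' he
    · exact (BisimStep.refl .refl _).execSeq (fun _ _ _ => ihF) h h'
  | whileDo e st =>
    rcases exec_iff.1 h with ⟨he, _, hbody, hloop⟩ | ⟨he, rfl⟩ <;>
      rcases exec_iff.1 h' with ⟨he', _, hbody', hloop'⟩ | ⟨he', rfl⟩
    · obtain ⟨u, rfl, hu⟩ := execSeq_cons_iff.1 hbody
      obtain ⟨u', rfl, hu'⟩ := execSeq_cons_iff.1 hbody'
      obtain ⟨v, rfl, hv⟩ := execSeq_cons_iff.1 hloop
      obtain ⟨v', rfl, hv'⟩ := execSeq_cons_iff.1 hloop'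
      exact Or.inr ⟨σ, v, v', rfl, rfl, .execSeq (.execSeq (.refl _) hu hu') hv hv'⟩
    · exact absurd he he'
    · exact absurd he' he
    · exact Or.inr ⟨σ, _, _, rfl, rfl, .refl _⟩

theorem SameRun.bisimStep (h : SameRun τ τ') : BisimStep SameRun τ τ' := by
  induction h with
  | refl τ => exact .refl .refl τ
  | execSeq _ h h' ih => exact ih.execSeq (fun _ _ _ => bisimStep_of_exec) h h'

theorem exec_bisim (h : Exec s σ τ) (h' : Exec s σ τ') : Bisim τ τ' :=
  ⟨SameRun, .execSeq (.refl _) (execSeq_single_iff.2 h) (execSeq_single_iff.2 h'),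
    fun _ _ => SameRun.bisimStep⟩

end Determinism

section Completeness

variable {U V : StatePred} {s : Stmt} {e : Expr} {st sf : Stmt} {σ : State} {τ t : Trace}

def StrongestPost (U : StatePred) (s : Stmt) : TracePred := fun τ => ∃ σ, U σ ∧ Exec s σ τ

theorem strongestPost_iff : StrongestPost U s τ ↔ U τ.hd ∧ Exec s τ.hd τ := by
  refine ⟨fun ⟨σ, hU, h⟩ => ?_, fun h => ⟨τ.hd, h⟩⟩
  rw [exec_hd h]
  exact ⟨hU, h⟩

theorem execSeq_of_follows {Q : TracePred} (hQ : ∀ τ, Q τ → Exec s τ.hd τ) {τ τ' : Trace}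
    (h : Follows Q τ τ') : ExecSeq s τ τ' := by
  refine ⟨_, _, evalConsistent_sup_exec (E := fun _ _ _ => False)
    (ES := fun s' a b => s' = s ∧ Follows Q a b) (fun _ _ _ => False.elim) ?_, Or.inl ⟨rfl, h⟩⟩
  rintro _ a b ⟨rfl, hf⟩
  rcases follows_dest hf with ⟨σ, rfl, hhd, hb⟩ | ⟨σ, t, t', rfl, rfl, hf'⟩
  · exact Or.inl ⟨σ, rfl, Or.inr (hhd ▸ hQ b hb)⟩
  · exact Or.inr ⟨σ, t, t', rfl, rfl, Or.inl ⟨rfl, hf'⟩⟩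

theorem strongestPost_seq {s₀ s₁ : Stmt}
    (h : Chop (StrongestPost U s₀) (StrongestPost V s₁) τ) : StrongestPost U (.seq s₀ s₁) τ := by
  obtain ⟨τ₀, ⟨σ, hU, h₀⟩, hf⟩ := h
  exact ⟨σ, hU, exec_iff.2 ⟨τ₀, h₀, execSeq_of_follows (fun _ h => (strongestPost_iff.1 h).2) hf⟩⟩

theorem strongestPost_ifte
    (h : Chop (Dup U) (fun τ => StrongestPost (fun σ => istrue e σ ∧ U σ) st τ ∨
      StrongestPost (fun σ => ¬ istrue e σ ∧ U σ) sf τ) τ) :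
    StrongestPost U (.ifte e st sf) τ := by
  obtain ⟨σ, t, rfl, hU, hhd, ht⟩ := exists_of_chop_dup h
  refine ⟨σ, hU, exec_iff.2 ?_⟩
  rcases ht with ht | ht <;> obtain ⟨⟨he, -⟩, ht⟩ := strongestPost_iff.1 ht <;> rw [hhd] at he ht
  · exact Or.inl ⟨he, execSeq_dup_iff.2 ⟨t, rfl, ht⟩⟩
  · exact Or.inr ⟨he, execSeq_dup_iff.2 ⟨t, rfl, ht⟩⟩

/-- The postcondition of the loop rule for the invariant `True` and the body's strongest
postcondition, after the initial doubleton. -/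
def LoopTail (e : Expr) (st : Stmt) : TracePred :=
  Chop (Iter (Chop (StrongestPost (istrue e) st) (Dup fun _ => True)))
    (Sglt fun σ => ¬ istrue e σ)

theorem exec_whileDo_of_loopTail (hhd : t.hd = σ) (ht : LoopTail e st t) :
    Exec (.whileDo e st) σ (cons σ t) := by
  -- `ES` pairs the remainder of a body run with the remainder of the whole loop trace.
  refine ⟨_, _, evalConsistent_sup_exec
    (E := fun s σ τ => s = .whileDo e st ∧ ∃ t, τ = cons σ t ∧ t.hd = σ ∧ LoopTail e st t)
    (ES := fun s a b => s = .whileDo e st ∧ Follows (Chop (Dup fun _ => True) (LoopTail e st)) a b)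
    ?_ ?_, Or.inl ⟨rfl, t, rfl, hhd, ht⟩⟩
  · rintro _ σ _ ⟨rfl, u, rfl, hu, τi, hiter, hexit⟩
    rcases iter_dest hiter with ⟨σ', rfl⟩ | ⟨τ₀, ⟨τb, hbody, hdup⟩, hiter'⟩
    · obtain ⟨-, σ'', he, rfl⟩ := follows_single_iff.1 hexit
      obtain rfl : σ'' = σ := hu
      exact Or.inr ⟨he, rfl⟩
    · have hτb : τb.hd = σ := by rw [← hu, hexit.hd_eq, hiter'.hd_eq, hdup.hd_eq]
      obtain ⟨he, hb⟩ := hτb ▸ strongestPost_iff.1 hbody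
      refine Or.inl ⟨he, cons σ τb, Or.inr (execSeq_dup_iff.2 ⟨τb, rfl, hb⟩), Or.inl ⟨rfl, ?_⟩⟩
      exact follows_cons_iff.2 ⟨u, rfl, hdup.chop (hiter'.chop hexit)⟩
  · rintro _ a b ⟨rfl, hf⟩
    rcases follows_dest hf with ⟨σ, rfl, hhd, hb⟩ | ⟨σ, a', b', rfl, rfl, hf'⟩
    · obtain ⟨σ', u, rfl, -, hu, hloop⟩ := exists_of_chop_dup hb
      obtain rfl : σ' = σ := hhd
      exact Or.inl ⟨σ', rfl, Or.inl ⟨rfl, u, rfl, hu, hloop⟩⟩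
    · exact Or.inr ⟨σ, a', b', rfl, rfl, Or.inl ⟨rfl, hf'⟩⟩

theorem strongestPost_whileDo (h : Chop (Dup U) (LoopTail e st) τ) :
    StrongestPost U (.whileDo e st) τ := by
  obtain ⟨σ, t, rfl, hU, hhd, ht⟩ := exists_of_chop_dup h
  exact ⟨σ, hU, exec_whileDo_of_loopTail hhd ht⟩

theorem tHoare_strongestPost (s : Stmt) (U : StatePred) : THoare U s (StrongestPost U s) := by
  induction s generalizing U with
  | assign x e =>
    refine .conseq (fun _ => id) (.assign U x e) ?_
    rintro _ ⟨σ, hU, rfl⟩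
    exact ⟨σ, hU, exec_iff.2 rfl⟩
  | skip =>
    refine .conseq (fun _ => id) (.skip U) ?_
    rintro _ ⟨σ, hU, rfl⟩
    exact ⟨σ, hU, exec_iff.2 rfl⟩
  | seq s₀ s₁ ih₀ ih₁ =>
    have hs₀ : THoare U s₀ (Chop (StrongestPost U s₀) (Sglt (Last (StrongestPost U s₀)))) :=
      .conseq (fun _ => id) (ih₀ U) fun τ hτ => chop_sglt (fun σ hσ => ⟨τ, hτ, hσ⟩) hτ
    exact .conseq (fun _ => id) (.seq hs₀ (ih₁ _)) fun _ => strongestPost_seq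
  | ifte e st sf ihT ihF =>
    exact .conseq (fun _ => id)
      (.ifte (.conseq (fun _ => id) (ihT _) fun _ => Or.inl)
        (.conseq (fun _ => id) (ihF _) fun _ => Or.inr))
      fun _ => strongestPost_ifte
  | whileDo e st ih =>
    exact .conseq (fun _ => id)
      (.whileDo (I := fun _ => True) (fun _ _ => trivial)
        (.conseq (fun _ => And.left) (ih _) fun _ => chop_sglt fun _ _ => trivial))
      fun _ => strongestPost_whileDo

end Completeness

/-- Total-correctness completeness of the trace-based Hoare logic. -/
theorem tHoare_complete_total (s : Stmt) (U : StatePred) (P : TracePred)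
    (hP : IsSetoidPred P)
    (h : ∀ σ : State, U σ → ∃ τ : Trace, Exec s σ τ ∧ P τ) :
    THoare U s P := by
  refine .conseq (fun _ => id) (tHoare_strongestPost s U) ?_
  rintro τ ⟨σ, hU, hτ⟩
  obtain ⟨τ₀, hτ₀, hPτ₀⟩ := h σ hU
  exact hP τ₀ τ hPτ₀ (exec_bisim hτ₀ hτ)

end WhileTrace
end

section
/- Projection into the partial-correctness Hoare logic (general form): for any While statement s, state predicate U and setoid trace predicate P, if ⊢{U} s {P} is derivable in the trace-based Hoare logic, then for any state predicate W, ⊢p {U ∧ W} s {Last([W] ** P)} is derivable in the state-based partial-correctness Hoare logic. -/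
namespace WhileTrace

/-! Induction on the derivation, reading `Last ([W] ** P)` as the set of last states of finite
`P`-traces that start in `W`. The only coinductive work is in the loop rule: the invariant of the
projected loop says that the current state ends a finite prefix of the iteration `(P ** ⟨I⟩)*`,
and such a prefix can be extended by one more finite round because `R* ** R ⊨ R*`. -/

lemma trace_cases (τ : Trace) :
    (∃ σ, τ = Trace.single σ) ∨ (∃ σ τ', τ = Trace.cons σ τ') := by
  obtain ⟨σ, s⟩ := τ
  rcases h : Stream'.Seq.destruct s with _ | ⟨a, s'⟩
  · exact Or.inl ⟨σ, by rw [Stream'.Seq.destruct_eq_none h]; rfl⟩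
  · exact Or.inr ⟨σ, (a, s'), by rw [Stream'.Seq.destruct_eq_cons h]; rfl⟩

lemma single_ne_cons {σ σ' : State} {τ : Trace} : Trace.single σ ≠ Trace.cons σ' τ := by
  intro h
  simpa [Trace.single, Trace.cons] using congrArg (fun t : Trace => t.2.head) h

lemma single_inj {σ σ' : State} (h : Trace.single σ = Trace.single σ') : σ = σ' :=
  congrArg Prod.fst h

lemma cons_inj {σ σ' : State} {τ τ' : Trace} (h : Trace.cons σ τ = Trace.cons σ' τ') :
    σ = σ' ∧ τ = τ' := by
  have htl : Stream'.Seq.cons τ.1 τ.2 = Stream'.Seq.cons τ'.1 τ'.2 := congrArg Prod.snd h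
  have hhd := congrArg Stream'.Seq.head htl
  rw [Stream'.Seq.head_cons, Stream'.Seq.head_cons] at hhd
  have htail := congrArg Stream'.Seq.tail htl
  rw [Stream'.Seq.tail_cons, Stream'.Seq.tail_cons] at htail
  exact ⟨congrArg Prod.fst h, Prod.ext (Option.some.inj hhd) htail⟩

section Follows

variable {Q Q' : TracePred}

lemma follows_unfold {τ τ' : Trace} (h : Follows Q τ τ') :
    (∃ σ, τ = Trace.single σ ∧ τ'.hd = σ ∧ Q τ') ∨
    (∃ σ a b, τ = Trace.cons σ a ∧ τ' = Trace.cons σ b ∧ Follows Q a b) := by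
  obtain ⟨R, hR, hstep⟩ := h
  rcases hstep _ _ hR with hsingle | ⟨σ, a, b, ha, hb, hab⟩
  · exact Or.inl hsingle
  · exact Or.inr ⟨σ, a, b, ha, hb, R, hab, hstep⟩

lemma follows_mono (hQ : ∀ τ, Q τ → Q' τ) {τ τ' : Trace} (h : Follows Q τ τ') :
    Follows Q' τ τ' := by
  obtain ⟨R, hR, hstep⟩ := h
  refine ⟨R, hR, fun a b hab => ?_⟩
  rcases hstep a b hab with ⟨σ, ha, hb, hQb⟩ | hcons
  · exact Or.inl ⟨σ, ha, hb, hQ b hQb⟩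
  · exact Or.inr hcons

lemma follows_single {σ : State} {τ : Trace} (hhd : τ.hd = σ) (hQ : Q τ) :
    Follows Q (Trace.single σ) τ :=
  ⟨fun a b => a = Trace.single σ ∧ b = τ, ⟨rfl, rfl⟩,
    fun _ _ ⟨ha, hb⟩ => Or.inl ⟨σ, ha, hb ▸ hhd, hb ▸ hQ⟩⟩

lemma follows_cons {σ : State} {τ τ' : Trace} (h : Follows Q τ τ') :
    Follows Q (Trace.cons σ τ) (Trace.cons σ τ') := by
  obtain ⟨R, hR, hstep⟩ := h
  refine ⟨fun a b => R a b ∨ (a = Trace.cons σ τ ∧ b = Trace.cons σ τ'),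
    Or.inr ⟨rfl, rfl⟩, fun a b hab => ?_⟩
  rcases hab with hab | ⟨rfl, rfl⟩
  · rcases hstep a b hab with hsingle | ⟨σ', a', b', ha, hb, hab'⟩
    · exact Or.inl hsingle
    · exact Or.inr ⟨σ', a', b', ha, hb, Or.inl hab'⟩
  · exact Or.inr ⟨σ, τ, τ', rfl, rfl, Or.inl hR⟩

lemma follows_hd {τ τ' : Trace} (h : Follows Q τ τ') : τ'.hd = τ.hd := by
  rcases follows_unfold h with ⟨σ, rfl, hhd, -⟩ | ⟨σ, a, b, rfl, rfl, -⟩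
  · exact hhd
  · rfl

lemma follows_single_iff_s18 {σ : State} {τ : Trace} :
    Follows Q (Trace.single σ) τ ↔ τ.hd = σ ∧ Q τ := by
  refine ⟨fun h => ?_, fun h => follows_single h.1 h.2⟩
  rcases follows_unfold h with ⟨σ', hσ, hhd, hQ⟩ | ⟨σ', a, b, hcons, -, -⟩
  · exact ⟨hhd.trans (single_inj hσ).symm, hQ⟩
  · exact absurd hcons single_ne_cons

lemma follows_self_s18 (hQ : ∀ σ, Q (Trace.single σ)) (τ : Trace) : Follows Q τ τ := by
  refine ⟨Eq, rfl, fun a b hab => ?_⟩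
  subst hab
  rcases trace_cases a with ⟨σ, rfl⟩ | ⟨σ, a', rfl⟩
  · exact Or.inl ⟨σ, rfl, rfl, hQ σ⟩
  · exact Or.inr ⟨σ, a', a', rfl, rfl, rfl⟩

lemma follows_trans {P : TracePred} {τ₀ τ₁ τ₂ : Trace} (h₁ : Follows P τ₀ τ₁)
    (h₂ : Follows Q τ₁ τ₂) : Follows (Chop P Q) τ₀ τ₂ := by
  refine ⟨fun x y => ∃ b, Follows P x b ∧ Follows Q b y, ⟨τ₁, h₁, h₂⟩, ?_⟩
  rintro x y ⟨b, hxb, hby⟩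
  rcases follows_unfold hxb with ⟨σ, rfl, hhd, hPb⟩ | ⟨σ, x', b', rfl, rfl, hxb'⟩
  · exact Or.inl ⟨σ, rfl, (follows_hd hby).trans hhd, b, hPb, hby⟩
  · rcases follows_unfold hby with ⟨σ', hb, -, -⟩ | ⟨σ', b'', y', hb, rfl, hby'⟩
    · exact absurd hb.symm single_ne_cons
    · obtain ⟨rfl, rfl⟩ := cons_inj hb
      exact Or.inr ⟨σ, x', y', rfl, rfl, b', hxb', hby'⟩

lemma follows_sglt_of_converges {V : StatePred} {τ τ' : Trace} {σ : State}
    (h : Follows (Sglt V) τ τ') (hc : Converges τ' σ) : Converges τ σ ∧ V σ := by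
  induction hc generalizing τ with
  | single σ =>
    rcases follows_unfold h with ⟨σ₀, rfl, hhd, σ₁, hV, hσ⟩ | ⟨σ₀, a, b, -, hb, -⟩
    · obtain rfl : σ = σ₁ := single_inj hσ
      obtain rfl : σ = σ₀ := hhd
      exact ⟨Converges.single σ, hV⟩
    · exact absurd hb single_ne_cons
  | cons σ' _ ih =>
    rcases follows_unfold h with ⟨σ₀, -, -, σ₁, -, hσ⟩ | ⟨σ₀, a, b, rfl, hb, hab⟩
    · exact absurd hσ.symm single_ne_cons
    · obtain ⟨-, rfl⟩ := cons_inj hb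
      exact (ih hab).imp_left (Converges.cons σ₀)

lemma Converges.exists_follows {τ₁ τ₂ : Trace} {ρ σ : State} (h₁ : Converges τ₁ ρ)
    (hhd : τ₂.hd = ρ) (hQ : Q τ₂) (h₂ : Converges τ₂ σ) :
    ∃ τ₃, Follows Q τ₁ τ₃ ∧ Converges τ₃ σ := by
  induction h₁ with
  | single ρ => exact ⟨τ₂, follows_single hhd hQ, h₂⟩
  | cons σ' _ ih =>
    obtain ⟨τ₃, hf, hc⟩ := ih hhd
    exact ⟨Trace.cons σ' τ₃, follows_cons hf, Converges.cons σ' hc⟩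

end Follows

section Iter

variable {R : TracePred}

lemma iter_single (σ : State) : Iter R (Trace.single σ) :=
  ⟨fun a => ∃ σ', a = Trace.single σ', ⟨σ, rfl⟩,
    fun _ ⟨σ', ha⟩ => Or.inl ⟨σ', trivial, ha⟩⟩

lemma iter_unfold {τ : Trace} (h : Iter R τ) :
    Sglt (fun _ => True) τ ∨ ∃ τ₀, R τ₀ ∧ Follows (Iter R) τ₀ τ := by
  obtain ⟨X, hX, hstep⟩ := h
  exact (hstep τ hX).imp_right fun ⟨τ₀, hR, hf⟩ =>
    ⟨τ₀, hR, follows_mono (fun a ha => ⟨X, ha, hstep⟩) hf⟩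

lemma iter_of_chop {τ : Trace} (h : Chop (Iter R) R τ) : Iter R τ := by
  refine ⟨fun a => Iter R a ∨ Chop (Iter R) R a, Or.inr h, ?_⟩
  rintro a (ha | ⟨b, hb, hba⟩)
  · exact (iter_unfold ha).imp_right fun ⟨τ₀, hR, hf⟩ =>
      ⟨τ₀, hR, follows_mono (fun _ => Or.inl) hf⟩
  · rcases iter_unfold hb with ⟨σ, -, rfl⟩ | ⟨τ₀, hR, hf⟩
    · exact Or.inr ⟨a, (follows_single_iff_s18.1 hba).2,
        follows_self_s18 (fun σ => Or.inl (iter_single σ)) a⟩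
    · exact Or.inr ⟨τ₀, hR, follows_mono (fun _ => Or.inr) (follows_trans hf hba)⟩

end Iter

def LastFrom (W : StatePred) (P : TracePred) : StatePred :=
  fun σ => ∃ τ, W τ.hd ∧ P τ ∧ Converges τ σ

section LastFrom

variable {W W' : StatePred} {P P' Q : TracePred} {σ : State}

lemma last_chop_sglt_eq_lastFrom : Last (Chop (Sglt W) P) = LastFrom W P := by
  ext σ
  constructor
  · rintro ⟨τ', ⟨τ, ⟨ρ, hW, rfl⟩, hf⟩, hc⟩
    obtain ⟨hhd, hP⟩ := follows_single_iff_s18.1 hf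
    exact ⟨τ', hhd ▸ hW, hP, hc⟩
  · rintro ⟨τ, hW, hP, hc⟩
    exact ⟨τ, ⟨Trace.single τ.hd, ⟨τ.hd, hW, rfl⟩, follows_single rfl hP⟩, hc⟩

lemma LastFrom.mono (hW : ∀ σ, W σ → W' σ) (hP : ∀ τ, P τ → P' τ) (h : LastFrom W P σ) :
    LastFrom W' P' σ :=
  let ⟨τ, hWτ, hPτ, hc⟩ := h
  ⟨τ, hW _ hWτ, hP τ hPτ, hc⟩

lemma lastFrom_sglt {U : StatePred} (hW : W σ) (hU : U σ) : LastFrom W (Sglt U) σ :=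
  ⟨Trace.single σ, hW, ⟨σ, hU, rfl⟩, Converges.single σ⟩

lemma lastFrom_dup {U : StatePred} (hW : W σ) (hU : U σ) : LastFrom W (Dup U) σ :=
  ⟨Trace.cons σ (Trace.single σ), hW, ⟨σ, hU, rfl⟩, Converges.cons σ (Converges.single σ)⟩

lemma lastFrom_chop (h : LastFrom (LastFrom W P) Q σ) : LastFrom W (Chop P Q) σ := by
  obtain ⟨τ₂, ⟨τ₁, hW, hP, hc₁⟩, hQ, hc₂⟩ := h
  obtain ⟨τ₃, hf, hc₃⟩ := hc₁.exists_follows rfl hQ hc₂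
  exact ⟨τ₃, (follows_hd hf).symm ▸ hW, ⟨τ₁, hP, hf⟩, hc₃⟩

lemma lastFrom_chop_sglt {V : StatePred} (h : LastFrom W (Chop P (Sglt V)) σ) :
    V σ ∧ LastFrom W P σ := by
  obtain ⟨τ', hW, ⟨τ, hP, hf⟩, hc⟩ := h
  obtain ⟨hcτ, hV⟩ := follows_sglt_of_converges hf hc
  exact ⟨hV, τ, (follows_hd hf) ▸ hW, hP, hcτ⟩

lemma lastFrom_dup_chop {U : StatePred} (h : LastFrom (fun σ => U σ ∧ W σ) P σ) :
    LastFrom W (Chop (Dup U) P) σ :=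
  lastFrom_chop (h.mono (fun _ hUW => lastFrom_dup hUW.2 hUW.1) fun _ => id)

end LastFrom

def Projects (U : StatePred) (s : Stmt) (P : TracePred) : Prop :=
  ∀ W : StatePred, PHoare (fun σ => U σ ∧ W σ) s (LastFrom W P)

namespace Projects

variable {U U' : StatePred} {s : Stmt} {P P' : TracePred}

lemma assign (U : StatePred) (x : Var) (e : Expr) : Projects U (.assign x e) (UpdPred U x e) :=
  fun _ => .conseq
    (fun σ hUW => ⟨Trace.cons σ (Trace.single (update σ x (e σ))), hUW.2, ⟨σ, hUW.1, rfl⟩,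
      Converges.cons σ (Converges.single _)⟩)
    (.assign _ x e) fun _ => id

lemma skip (U : StatePred) : Projects U .skip (Sglt U) :=
  fun _ => .conseq (fun _ hUW => lastFrom_sglt hUW.2 hUW.1) (.skip _) fun _ => id

lemma seq {V : StatePred} {s₀ s₁ : Stmt} {Q : TracePred}
    (h₀ : Projects U s₀ (Chop P (Sglt V))) (h₁ : Projects V s₁ Q) :
    Projects U (.seq s₀ s₁) (Chop P Q) :=
  fun W => .seq (.conseq (fun _ => id) (h₀ W) fun _ => lastFrom_chop_sglt)
    (.conseq (fun _ => id) (h₁ (LastFrom W P)) fun _ => lastFrom_chop)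

lemma ifte {e : Expr} {st sf : Stmt}
    (ht : Projects (fun σ => istrue e σ ∧ U σ) st P)
    (hf : Projects (fun σ => ¬ istrue e σ ∧ U σ) sf P) :
    Projects U (.ifte e st sf) (Chop (Dup U) P) :=
  fun _ => .ifte
    (.conseq (fun _ h => ⟨⟨h.1, h.2.1⟩, h.2⟩) (ht _) fun _ => lastFrom_dup_chop)
    (.conseq (fun _ h => ⟨⟨h.1, h.2.1⟩, h.2⟩) (hf _) fun _ => lastFrom_dup_chop)

lemma whileDo {I : StatePred} {e : Expr} {st : Stmt} (hUI : ∀ σ, U σ → I σ)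
    (hbody : Projects (fun σ => istrue e σ ∧ I σ) st (Chop P (Sglt I))) :
    Projects U (.whileDo e st)
      (Chop (Dup U) (Chop (Iter (Chop P (Dup I))) (Sglt (fun σ => ¬ istrue e σ)))) := by
  intro W
  let Reached := LastFrom (fun σ => U σ ∧ W σ) (Iter (Chop P (Dup I)))
  have hstep : PHoare (fun σ => istrue e σ ∧ (I σ ∧ Reached σ)) st
      (fun σ => I σ ∧ Reached σ) := by
    refine .conseq (fun _ h => ⟨⟨h.1, h.2.1⟩, h.2.2⟩) (hbody Reached) fun σ h => ?_
    obtain ⟨hI, hP⟩ := lastFrom_chop_sglt h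
    have hround : LastFrom Reached (Chop P (Dup I)) σ :=
      lastFrom_chop (lastFrom_dup hP hI)
    exact ⟨hI, (lastFrom_chop hround).mono (fun _ => id) fun _ => iter_of_chop⟩
  refine .conseq (fun σ h => ⟨hUI σ h.1, ⟨Trace.single σ, h, iter_single σ, Converges.single σ⟩⟩) (.whileDo hstep) ?_
  rintro σ ⟨⟨-, hreached⟩, hexit⟩
  exact lastFrom_dup_chop (lastFrom_chop (lastFrom_sglt hreached hexit))

lemma conseq (hU : ∀ σ, U σ → U' σ) (h : Projects U' s P') (hP : ∀ τ, P' τ → P τ) :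
    Projects U s P :=
  fun W => .conseq (fun _ h => ⟨hU _ h.1, h.2⟩) (h W) fun _ => LastFrom.mono (fun _ => id) hP

lemma exist {Z : Type} {U : Z → StatePred} {P : Z → TracePred}
    (h : ∀ z, Projects (U z) s (P z)) :
    Projects (fun σ => ∃ z, U z σ) s (fun τ => ∃ z, P z τ) :=
  fun W => .conseq (fun _ ⟨⟨z, hU⟩, hW⟩ => ⟨z, hU, hW⟩) (.exist fun z => h z W)
    fun _ ⟨z, hz⟩ => hz.mono (fun _ => id) fun _ hP => ⟨z, hP⟩

end Projects

theorem tHoare_project_general_general (s : Stmt) (U : StatePred) (P : TracePred)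
    (h : THoare U s P) :
    ∀ W : StatePred, PHoare (fun σ => U σ ∧ W σ) s (Last (Chop (Sglt W) P)) := by
  suffices Projects U s P by
    intro W
    rw [last_chop_sglt_eq_lastFrom]
    exact this W
  induction h with
  | assign U x e => exact .assign U x e
  | skip U => exact .skip U
  | seq _ _ ih₀ ih₁ => exact ih₀.seq ih₁
  | ifte _ _ iht ihf => exact iht.ifte ihf
  | whileDo hUI _ ih => exact .whileDo hUI ih
  | conseq hU _ hP ih => exact .conseq hU ih hP
  | exist _ ih => exact .exist ih

/-- Projection into the partial-correctness Hoare logic (general form). -/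
theorem tHoare_project_general (s : Stmt) (U : StatePred) (P : TracePred)
    (hP : IsSetoidPred P) (h : THoare U s P) :
    ∀ W : StatePred, PHoare (fun σ => U σ ∧ W σ) s (Last (Chop (Sglt W) P)) :=
  tHoare_project_general_general s U P h

end WhileTrace
end
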